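/- Strong growth condition with baselines: let B ∈ ℝ be a baseline and R̄_max > 0 be such that |x − B| ≤ R̄_max for all a ∈ {1,…,K} and all x in the support of P_a. Then for every θ ∈ ℝ^K, Σ_{a₀=1}^K π_θ(a₀) · ∫ ‖g_B(θ, a₀, x)‖₂² dP_{a₀}(x) ≤ (8·R̄_max²·R_max·K^{3/2} / Δ²) · ‖∇(θ)‖₂. -/

import Mathlib

/-!
Both sides are governed by the variance `∑ π(a) (1 - π(a))` of the policy. For a sampled
action `a₀`, `‖g_B‖₂² = (x - B)² ∑ₐ (𝟙{a = a₀} - π(a))² ≤ 2 R̄² (1 - π(a₀))`, so the left side is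
at most `2 R̄² ∑ π(a) (1 - π(a))`. As the rewards are `Δ`-separated, every action but at most one,
`b`, has `|r(a) - π^⊤r| ≥ Δ / 2`; hence `∑ π(a) (1 - π(a)) ≤ 2 (1 - π(b)) ≤ (4 / Δ) ∑ |∇(θ)(a)|`,
and Cauchy–Schwarz bounds the last sum by `√K ‖∇(θ)‖₂`. Finally `Δ ≤ 2 R_max ≤ K R_max`.
-/

open MeasureTheory Finset Real

/-- Softmax policy. -/
noncomputable def softmax {K : ℕ} (θ : Fin K → ℝ) (a : Fin K) : ℝ :=
  Real.exp (θ a) / ∑ a' : Fin K, Real.exp (θ a')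

/-- Expected reward `π_θ^⊤ r`. -/
noncomputable def value {K : ℕ} (r θ : Fin K → ℝ) : ℝ :=
  ∑ a : Fin K, softmax θ a * r a

/-- True gradient of `θ ↦ π_θ^⊤ r`. -/
noncomputable def pgrad {K : ℕ} (r θ : Fin K → ℝ) (a : Fin K) : ℝ :=
  softmax θ a * (r a - value r θ)

/-- Baseline stochastic gradient. -/
noncomputable def sgradB {K : ℕ} (B : ℝ) (θ : Fin K → ℝ) (a₀ : Fin K) (x : ℝ)
    (a : Fin K) : ℝ :=
  ((if a = a₀ then (1 : ℝ) else 0) - softmax θ a) * (x - B)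

/-- Euclidean norm on `ℝ^K`. -/
noncomputable def norm2 {K : ℕ} (v : Fin K → ℝ) : ℝ :=
  Real.sqrt (∑ a : Fin K, (v a) ^ 2)

theorem norm2_sq {K : ℕ} (v : Fin K → ℝ) : norm2 v ^ 2 = ∑ a, v a ^ 2 :=
  sq_sqrt (sum_nonneg fun _ _ => sq_nonneg _)

theorem norm2_nonneg {K : ℕ} (v : Fin K → ℝ) : 0 ≤ norm2 v :=
  sqrt_nonneg _

theorem sum_abs_le_sqrt_card_mul_norm2 {K : ℕ} (v : Fin K → ℝ) :
    ∑ a, |v a| ≤ √K * norm2 v := by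
  have h := sq_sum_le_card_mul_sum_sq (s := univ) (f := fun a => |v a|)
  simp only [card_univ, Fintype.card_fin, sq_abs] at h
  rw [norm2, ← sqrt_mul (Nat.cast_nonneg K)]
  exact le_sqrt_of_sq_le h

section ProbabilityVector

variable {ι : Type*} [Fintype ι] {p : ι → ℝ}

theorem le_one_of_sum_eq_one (hp0 : ∀ a, 0 ≤ p a) (hp : ∑ a, p a = 1) (a : ι) : p a ≤ 1 :=
  hp ▸ single_le_sum (fun b _ => hp0 b) (mem_univ a)

variable [DecidableEq ι]

theorem sum_erase_eq_one_sub (hp : ∑ a, p a = 1) (b : ι) :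
    ∑ a ∈ univ.erase b, p a = 1 - p b := by
  rw [← hp, ← sum_erase_add _ _ (mem_univ b), add_sub_cancel_right]

theorem sum_sq_ite_sub_le (hp0 : ∀ a, 0 ≤ p a) (hp : ∑ a, p a = 1) (b : ι) :
    ∑ a, ((if a = b then (1 : ℝ) else 0) - p a) ^ 2 ≤ 2 * (1 - p b) := by
  have hp1 := le_one_of_sum_eq_one hp0 hp
  rw [← add_sum_erase _ _ (mem_univ b), if_pos rfl]
  have hrest : ∑ a ∈ univ.erase b, ((if a = b then (1 : ℝ) else 0) - p a) ^ 2 ≤ 1 - p b := by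
    rw [← sum_erase_eq_one_sub hp b]
    refine sum_le_sum fun a ha => ?_
    rw [if_neg (ne_of_mem_erase ha)]
    nlinarith [hp0 a, hp1 a]
  nlinarith [hp0 b, hp1 b]

theorem sum_mul_one_sub_le (hp0 : ∀ a, 0 ≤ p a) (hp : ∑ a, p a = 1) (b : ι) :
    ∑ a, p a * (1 - p a) ≤ 2 * (1 - p b) := by
  have hp1 := le_one_of_sum_eq_one hp0 hp
  rw [← sum_erase_add _ _ (mem_univ b)]
  have hrest : ∑ a ∈ univ.erase b, p a * (1 - p a) ≤ 1 - p b := by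
    rw [← sum_erase_eq_one_sub hp b]
    exact sum_le_sum fun a _ => by nlinarith [hp0 a, hp1 a]
  nlinarith [hp0 b, hp1 b]

theorem mul_one_sub_le_sum_mul (hp0 : ∀ a, 0 ≤ p a) (hp : ∑ a, p a = 1) {f : ι → ℝ}
    (hf : ∀ a, 0 ≤ f a) {c : ℝ} {b : ι} (hc : ∀ a, a ≠ b → c ≤ f a) :
    c * (1 - p b) ≤ ∑ a, p a * f a := by
  rw [← sum_erase_eq_one_sub hp b, mul_sum, ← sum_erase_add _ _ (mem_univ b)]
  have hrest : ∑ a ∈ univ.erase b, c * p a ≤ ∑ a ∈ univ.erase b, p a * f a :=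
    sum_le_sum fun a ha => by
      rw [mul_comm]
      exact mul_le_mul_of_nonneg_left (hc a (ne_of_mem_erase ha)) (hp0 a)
  linarith [mul_nonneg (hp0 b) (hf b)]

end ProbabilityVector

theorem exists_forall_ne_half_le_abs_sub {ι : Type*} [Nonempty ι] {r : ι → ℝ} {Δ : ℝ}
    (hΔ : ∀ i j, i ≠ j → Δ ≤ |r i - r j|) (v : ℝ) :
    ∃ b, ∀ a, a ≠ b → Δ / 2 ≤ |r a - v| := by
  by_cases h : ∃ b, |r b - v| < Δ / 2
  · obtain ⟨b, hb⟩ := h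
    refine ⟨b, fun a hab => ?_⟩
    have := abs_sub_le (r a) v (r b)
    rw [abs_sub_comm v] at this
    linarith [hΔ a b hab]
  · push Not at h
    exact ⟨Classical.arbitrary ι, fun a _ => h a⟩

section Softmax

variable {K : ℕ} (θ : Fin K → ℝ)

theorem softmax_pos (a : Fin K) : 0 < softmax θ a :=
  div_pos (exp_pos _) (sum_pos (fun _ _ => exp_pos _) ⟨a, mem_univ a⟩)

theorem sum_softmax [NeZero K] : ∑ a, softmax θ a = 1 := by
  simp only [softmax, ← sum_div]
  exact div_self (sum_pos (fun _ _ => exp_pos _) univ_nonempty).ne'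

theorem norm2_sgradB_sq (B : ℝ) (a₀ : Fin K) (x : ℝ) :
    norm2 (sgradB B θ a₀ x) ^ 2
      = (x - B) ^ 2 * ∑ a, ((if a = a₀ then (1 : ℝ) else 0) - softmax θ a) ^ 2 := by
  rw [norm2_sq, mul_sum]
  exact sum_congr rfl fun a _ => by rw [sgradB, mul_pow, mul_comm]

theorem sum_softmax_mul_one_sub_le_norm2_pgrad [NeZero K] {r : Fin K → ℝ} {Δ : ℝ} (hΔ : 0 < Δ)
    (hsep : ∀ i j, i ≠ j → Δ ≤ |r i - r j|) :
    ∑ a, softmax θ a * (1 - softmax θ a) ≤ 4 * √K / Δ * norm2 (pgrad r θ) := by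
  obtain ⟨b, hb⟩ := exists_forall_ne_half_le_abs_sub hsep (value r θ)
  have hπ0 a := (softmax_pos θ a).le
  have hgap : Δ / 2 * (1 - softmax θ b) ≤ ∑ a, |pgrad r θ a| := by
    simp only [pgrad, abs_mul, abs_of_pos (softmax_pos θ _)]
    exact mul_one_sub_le_sum_mul hπ0 (sum_softmax θ) (fun _ => abs_nonneg _) hb
  rw [div_mul_eq_mul_div, le_div_iff₀ hΔ]
  nlinarith [sum_mul_one_sub_le hπ0 (sum_softmax θ) b,
    sum_abs_le_sqrt_card_mul_norm2 (pgrad r θ)]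

end Softmax

theorem integral_sq_le_of_ae_abs_le {α : Type*} [MeasurableSpace α] {μ : Measure α}
    [IsProbabilityMeasure μ] {f : α → ℝ} {R : ℝ} (hf : ∀ᵐ x ∂μ, |f x| ≤ R) :
    ∫ x, f x ^ 2 ∂μ ≤ R ^ 2 := by
  have hsq : ∀ᵐ x ∂μ, ‖f x ^ 2‖ ≤ R ^ 2 := by
    filter_upwards [hf] with x hx
    rw [norm_pow, norm_eq_abs]
    exact pow_le_pow_left₀ (abs_nonneg _) hx 2
  simpa using (le_abs_self _).trans (norm_integral_le_of_norm_le_const hsq)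

theorem integral_norm2_sgradB_sq_le {K : ℕ} (θ : Fin K → ℝ) (a₀ : Fin K) {μ : Measure ℝ}
    [IsProbabilityMeasure μ] {B R : ℝ} (hB : ∀ᵐ x ∂μ, |x - B| ≤ R) :
    ∫ x, norm2 (sgradB B θ a₀ x) ^ 2 ∂μ ≤ 2 * R ^ 2 * (1 - softmax θ a₀) := by
  have : NeZero K := ⟨a₀.pos.ne'⟩
  simp only [norm2_sgradB_sq, integral_mul_const]
  calc _ ≤ R ^ 2 * (2 * (1 - softmax θ a₀)) :=
        mul_le_mul (integral_sq_le_of_ae_abs_le hB)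
          (sum_sq_ite_sub_le (fun a => (softmax_pos θ a).le) (sum_softmax θ) a₀)
          (sum_nonneg fun _ _ => sq_nonneg _) (sq_nonneg R)
    _ = _ := by ring

theorem strong_growth_condition_with_baseline_general
    (K : ℕ) (hK : 2 ≤ K) (Rmax : ℝ)
    (r : Fin K → ℝ) (hr : ∀ a, r a ∈ Set.Icc (-Rmax) Rmax)
    (Δ : ℝ) (hΔpos : 0 < Δ)
    (hΔle : ∀ i j : Fin K, i ≠ j → Δ ≤ |r i - r j|)
    (P : Fin K → Measure ℝ) (hprob : ∀ a, IsProbabilityMeasure (P a))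
    (B : ℝ) (Rbar : ℝ)
    (hB : ∀ a, ∀ᵐ x ∂(P a), |x - B| ≤ Rbar)
    (θ : Fin K → ℝ) :
    ∑ a₀ : Fin K, softmax θ a₀ * ∫ x, (norm2 (sgradB B θ a₀ x)) ^ 2 ∂(P a₀)
      ≤ (8 * Rbar ^ 2 * Rmax * (K : ℝ) ^ ((3 : ℝ) / 2) / Δ ^ 2) * norm2 (pgrad r θ) := by
  have : NeZero K := ⟨by omega⟩
  have hΔRmax : Δ ≤ Rmax * K := by
    have h01 := (hΔle ⟨0, by omega⟩ ⟨1, by omega⟩ (by simp [Fin.ext_iff])).trans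
      (dist_le_of_mem_Icc (hr _) (hr _))
    have hK2 : (2 : ℝ) ≤ K := by exact_mod_cast hK
    nlinarith
  have hK32 : (K : ℝ) ^ ((3 : ℝ) / 2) = K * √K := by
    rw [show (3 : ℝ) / 2 = 1 + 1 / 2 by norm_num, rpow_add (by positivity), rpow_one, sqrt_eq_rpow]
  have hC : 0 ≤ 8 * Rbar ^ 2 * √K * norm2 (pgrad r θ) / Δ := by
    have := norm2_nonneg (pgrad r θ)
    positivity
  calc _ ≤ ∑ a₀, softmax θ a₀ * (2 * Rbar ^ 2 * (1 - softmax θ a₀)) :=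
        sum_le_sum fun a₀ _ => mul_le_mul_of_nonneg_left
          (integral_norm2_sgradB_sq_le θ a₀ (hB a₀)) (softmax_pos θ a₀).le
    _ = 2 * Rbar ^ 2 * ∑ a₀, softmax θ a₀ * (1 - softmax θ a₀) := by
        rw [mul_sum]; exact sum_congr rfl fun _ _ => by ring
    _ ≤ 2 * Rbar ^ 2 * (4 * √K / Δ * norm2 (pgrad r θ)) :=
        mul_le_mul_of_nonneg_left (sum_softmax_mul_one_sub_le_norm2_pgrad θ hΔpos hΔle)
          (by positivity)
    _ = 8 * Rbar ^ 2 * √K * norm2 (pgrad r θ) / Δ * 1 := by ring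
    _ ≤ 8 * Rbar ^ 2 * √K * norm2 (pgrad r θ) / Δ * (Rmax * K / Δ) :=
        mul_le_mul_of_nonneg_left ((one_le_div hΔpos).mpr hΔRmax) hC
    _ = _ := by rw [hK32]; ring

/-- Strong growth condition with baselines. -/
theorem strong_growth_condition_with_baseline
    (K : ℕ) (hK : 2 ≤ K) (Rmax : ℝ) (hRmax : 0 < Rmax)
    (r : Fin K → ℝ) (hr : ∀ a, r a ∈ Set.Icc (-Rmax) Rmax)
    (hties : ∀ i j : Fin K, i ≠ j → r i ≠ r j)
    (Δ : ℝ) (hΔpos : 0 < Δ)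
    (hΔle : ∀ i j : Fin K, i ≠ j → Δ ≤ |r i - r j|)
    (hΔmem : ∃ i j : Fin K, i ≠ j ∧ Δ = |r i - r j|)
    (P : Fin K → Measure ℝ) (hprob : ∀ a, IsProbabilityMeasure (P a))
    (hsupp : ∀ a, ∀ᵐ x ∂(P a), x ∈ Set.Icc (-Rmax) Rmax)
    (hmean : ∀ a, ∫ x, x ∂(P a) = r a)
    (B : ℝ) (Rbar : ℝ) (hRbar : 0 < Rbar)
    (hB : ∀ a, ∀ᵐ x ∂(P a), |x - B| ≤ Rbar)
    (θ : Fin K → ℝ) :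
    ∑ a₀ : Fin K, softmax θ a₀ * ∫ x, (norm2 (sgradB B θ a₀ x)) ^ 2 ∂(P a₀)
      ≤ (8 * Rbar ^ 2 * Rmax * (K : ℝ) ^ ((3 : ℝ) / 2) / Δ ^ 2) * norm2 (pgrad r θ) :=
  strong_growth_condition_with_baseline_general K hK Rmax r hr Δ hΔpos hΔle P hprob B Rbar hB θ
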